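/- Let F_1, ..., F_k : F_2^{2b} → F_2^b be mutually orthogonal CA defined by bipermutive rules of diameter d = b+1 (pairwise, the map z ↦ (F_l(z), F_m(z)) is bijective for l ≠ m), with k ≥ 2. Define the 2^{2b} × kb binary array A whose row indexed by z ∈ F_2^{2b} is the concatenation (F_1(z), F_2(z), ..., F_k(z)). Then A is an orthogonal array OA(2^{2b}, kb, 2, 2): for any two distinct columns i ≠ j, each pair in F_2^2 occurs exactly 2^{2b−2} times among the rows. -/

import Mathlib

open Finset

/-- A local rule `f : F_2^d → F_2` is bipermutive if
`f(x₁,…,x_d) = x₁ ⊕ φ(x₂,…,x_{d-1}) ⊕ x_d` for some `φ`. -/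
def Bipermutive {d : ℕ} (hd : 2 ≤ d) (f : (Fin d → ZMod 2) → ZMod 2) : Prop :=
  ∃ φ : (Fin (d - 2) → ZMod 2) → ZMod 2, ∀ x : Fin d → ZMod 2,
    f x = x ⟨0, by omega⟩
        + φ (fun i => x ⟨i.val + 1, by have := i.isLt; omega⟩)
        + x ⟨d - 1, by omega⟩

/-- The no-boundary CA `F : F_2^{2b} → F_2^b` with local rule `f` of diameter `d = b + 1`:
it applies `f` to each of the `b` windows of `d` consecutive input bits. -/
def CA2 {b : ℕ} (f : (Fin (b + 1) → ZMod 2) → ZMod 2)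
    (z : Fin (2 * b) → ZMod 2) (i : Fin b) : ZMod 2 :=
  f fun j => z ⟨i.val + j.val, by have hi := i.isLt; have hj := j.isLt; omega⟩

/-- Concatenation of two `b`-bit vectors into a `2b`-bit vector. -/
def concat {b : ℕ} (x y : Fin b → ZMod 2) (i : Fin (2 * b)) : ZMod 2 :=
  if h : i.val < b then x ⟨i.val, h⟩ else y ⟨i.val - b, by have := i.isLt; omega⟩

/-! Every pair of columns is read off two distinct coordinates of a bijective image of the row
index `z ∈ F_2^{2b}` in `F_2^b × F_2^b`, and exactly `2^{2b-2}` vectors of `F_2^{2b}` have two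
prescribed coordinates. For columns of different CA `F_l, F_m` the bijection is
`z ↦ (F_l z, F_m z)`, by orthogonality. For two columns of the same CA `F` it is
`z ↦ (right half of z, F z)`: permutivity in the leftmost variable recovers the bits of `z` from
right to left, the window of output `i` determining bit `i` from the bits after it. -/

theorem Fintype.card_filter_apply_eq_and_apply_eq {ι β : Type*} [Fintype ι] [DecidableEq ι]
    [Fintype β] [DecidableEq β] {p q : ι} (hpq : p ≠ q) (a c : β) :
    #{w : ι → β | w p = a ∧ w q = c} = Fintype.card β ^ (Fintype.card ι - 2) := by
  set s : ι → Finset β := Function.update (fun _ => Finset.univ) p {a}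
  have hs : ({w : ι → β | w p = a} : Finset _) = Fintype.piFinset s := by
    rw [Fintype.piFinset_update_singleton_eq_filter_piFinset_eq _ p (Finset.mem_univ a),
      Fintype.piFinset_univ]
  calc #{w : ι → β | w p = a ∧ w q = c}
      = #{w ∈ Fintype.piFinset s | w q = c} := by rw [← hs, filter_filter]
    _ = ∏ j ∈ univ.erase q, #(s j) :=
      Fintype.card_filter_piFinset_eq_of_mem _ _ (by simp [s, hpq.symm])
    _ = Fintype.card β ^ (Fintype.card ι - 2) := by
      rw [show (fun j => #(s j)) = Function.update (fun _ => Fintype.card β) p 1 by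
        ext j; obtain rfl | hj := eq_or_ne j p <;> simp [s, *]]
      rw [prod_update_of_mem (by simp [hpq]), prod_const, one_mul, card_sdiff,
        card_erase_of_mem (Finset.mem_univ _)]
      simp [hpq, Nat.sub_sub]

theorem Function.Bijective.card_filter_apply_eq_and_apply_eq {α ι β : Type*} [Fintype α]
    [Fintype ι] [DecidableEq ι] [Fintype β] [DecidableEq β] {g : α → ι → β}
    (hg : g.Bijective) {p q : ι} (hpq : p ≠ q) (a c : β) :
    #{z : α | g z p = a ∧ g z q = c} = Fintype.card β ^ (Fintype.card ι - 2) :=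
  (card_equiv (Equiv.ofBijective g hg) (by simp)).trans
    (Fintype.card_filter_apply_eq_and_apply_eq hpq a c)

theorem Bipermutive.eq_of_apply_eq {d : ℕ} {hd : 2 ≤ d} {f : (Fin d → ZMod 2) → ZMod 2}
    (hf : Bipermutive hd f) {x y : Fin d → ZMod 2} (hxy : f x = f y)
    (htail : ∀ j : Fin d, 0 < j.val → x j = y j) : x ⟨0, by omega⟩ = y ⟨0, by omega⟩ := by
  obtain ⟨φ, hφ⟩ := hf
  rw [hφ, hφ, htail ⟨d - 1, _⟩ (by simp only; omega)] at hxy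
  have hmid : (fun i : Fin (d - 2) => x ⟨i.val + 1, by omega⟩)
      = fun i => y ⟨i.val + 1, by omega⟩ := funext fun i => htail _ (by simp)
  rw [hmid] at hxy
  exact add_right_cancel (add_right_cancel hxy)

def rightHalf {b : ℕ} (z : Fin (2 * b) → ZMod 2) (t : Fin b) : ZMod 2 :=
  z ⟨b + t.val, by omega⟩

theorem Bipermutive.bijective_sumElim_rightHalf_CA2 {b : ℕ} {hd : 2 ≤ b + 1}
    {f : (Fin (b + 1) → ZMod 2) → ZMod 2} (hf : Bipermutive hd f) :
    (fun z => Sum.elim (rightHalf z) (CA2 f z)).Bijective := by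
  refine (Fintype.bijective_iff_injective_and_card _).2 ⟨fun z z' h => ?_, by simp [two_mul]⟩
  have hright (t : Fin b) : rightHalf z t = rightHalf z' t := congrFun h (Sum.inl t)
  have hCA (i : Fin b) : CA2 f z i = CA2 f z' i := congrFun h (Sum.inr i)
  funext k
  induction hn : 2 * b - k.val using Nat.strong_induction_on generalizing k with
  | _ n ih =>
    by_cases hk : b ≤ k.val
    · simpa [rightHalf, Nat.add_sub_cancel' hk] using hright ⟨k.val - b, by omega⟩
    · simpa using hf.eq_of_apply_eq (hCA ⟨k.val, by omega⟩)
        fun j hj => ih _ (by simp only; omega) _ rfl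

/-- The `2^{2b} × kb` binary array whose row indexed by `z` is the concatenation
`(F₁(z), …, F_k(z))` of the outputs of `k ≥ 2` mutually orthogonal bipermutive CA is an
orthogonal array `OA(2^{2b}, kb, 2, 2)`: any two distinct columns contain each pair of
bits exactly `2^{2b-2}` times. (A column is indexed by `(l, c)`, the `c`-th output
coordinate of `F_l`.) -/
theorem moca_binary_orthogonal_array {b k : ℕ} (hb : 1 ≤ b)
    (fs : Fin k → (Fin (b + 1) → ZMod 2) → ZMod 2)
    (hbip : ∀ l, Bipermutive (by omega) (fs l))
    (horth : ∀ l m, l ≠ m → Function.Bijective fun z : Fin (2 * b) → ZMod 2 =>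
      (CA2 (fs l) z, CA2 (fs m) z)) :
    ∀ i j : Fin k × Fin b, i ≠ j → ∀ a c : ZMod 2,
      (univ.filter fun z : Fin (2 * b) → ZMod 2 =>
        CA2 (fs i.1) z i.2 = a ∧ CA2 (fs j.1) z j.2 = c).card = 2 ^ (2 * b - 2) := by
  rintro ⟨l, s⟩ ⟨m, t⟩ hne a c
  have hcard : Fintype.card (ZMod 2) ^ (Fintype.card (Fin b ⊕ Fin b) - 2) = 2 ^ (2 * b - 2) := by
    simp [two_mul]
  obtain rfl | hlm := eq_or_ne l m
  · have hst : s ≠ t := by rintro rfl; exact hne rfl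
    exact ((hbip l).bijective_sumElim_rightHalf_CA2.card_filter_apply_eq_and_apply_eq
      (Sum.inr_injective.ne hst) a c).trans hcard
  · have hpair : (fun z => Sum.elim (CA2 (fs l) z) (CA2 (fs m) z)).Bijective :=
      (Equiv.sumArrowEquivProdArrow _ _ _).symm.bijective.comp (horth l m hlm)
    exact (hpair.card_filter_apply_eq_and_apply_eq Sum.inl_ne_inr a c).trans hcard
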